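/- arXiv:1811.06737 — 4 statements merged into one kernel-verified Lean document; each statement's English description precedes it below -/
import Mathlib

section
/- For integers 0 ≤ k ≤ n, the cardinality of H^k_n, the set of sub-exceeding functions on [n] whose values form a weakly increasing sequence with image exactly {0,1,...,k}, equals the binomial coefficient C(n,k). -/
/-!
A function in `H^k_n` is a lattice path `0 = f 0 ≤ f 1 ≤ ⋯ ≤ f n = k` whose steps are `0` or
`1` (a larger step would skip a value of `[k]`). Such a path is determined by the set of the `k`
positions among the `n` steps where it goes up, and every `k`-subset of steps arises.
-/

open Finset

namespace Fin

variable {n : ℕ} {g : Fin (n + 1) → ℕ}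

theorem apply_le_val_of_step_le_one (h0 : g 0 = 0)
    (hstep : ∀ j : Fin n, g j.succ ≤ g j.castSucc + 1) (i : Fin (n + 1)) : g i ≤ i := by
  induction i using Fin.induction with
  | zero => simp [h0]
  | succ j ih => have := hstep j; simp only [val_castSucc, val_succ] at *; omega

theorem exists_apply_eq_of_step_le_one (hstep : ∀ j : Fin n, g j.succ ≤ g j.castSucc + 1)
    {m : ℕ} (h0 : g 0 ≤ m) (i : Fin (n + 1)) (hm : m ≤ g i) : ∃ i', g i' = m := by
  induction i using Fin.induction with
  | zero => exact ⟨0, le_antisymm h0 hm⟩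
  | succ j ih =>
    by_cases hj : m ≤ g j.castSucc
    · exact ih hj
    · exact ⟨j.succ, by have := hstep j; omega⟩

end Fin

namespace Subexceeding

variable {n k : ℕ}

def H (n k : ℕ) : Set (Fin (n + 1) → Fin (n + 1)) :=
  {f | (∀ i, (f i : ℕ) ≤ (i : ℕ)) ∧ Monotone f ∧
    Set.range f = {x : Fin (n + 1) | (x : ℕ) ≤ k}}

theorem mem_H_iff (hk : k ≤ n) {f : Fin (n + 1) → Fin (n + 1)} :
    f ∈ H n k ↔ f 0 = 0 ∧
      (∀ j : Fin n, f j.castSucc ≤ f j.succ ∧ (f j.succ : ℕ) ≤ f j.castSucc + 1) ∧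
      (f (Fin.last n) : ℕ) = k := by
  constructor
  · rintro ⟨-, hmono, hrange⟩
    have hmem (x : Fin (n + 1)) : x ∈ Set.range f ↔ (x : ℕ) ≤ k := by rw [hrange]; rfl
    have hle (i : Fin (n + 1)) : (f i : ℕ) ≤ k := (hmem _).1 ⟨i, rfl⟩
    refine ⟨?_, fun j => ⟨hmono (Fin.castSucc_le_succ j), ?_⟩, ?_⟩
    · obtain ⟨i, hi⟩ := (hmem 0).2 (Nat.zero_le k)
      have := hmono (Fin.zero_le i)
      rw [hi] at this
      exact le_antisymm this (Fin.zero_le _)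
    · by_contra! hgap
      have := hle j.succ
      obtain ⟨i, hi⟩ := (hmem ⟨f j.castSucc + 1, by omega⟩).2 (by dsimp only; omega)
      have hfi : (f i : ℕ) = f j.castSucc + 1 := by rw [hi]
      rcases le_or_gt i j.castSucc with hij | hij
      · have := Fin.le_def.1 (hmono hij); omega
      · have := Fin.le_def.1 (hmono (Fin.castSucc_lt_iff_succ_le.1 hij)); omega
    · obtain ⟨i, hi⟩ := (hmem ⟨k, by omega⟩).2 le_rfl
      have := hmono (Fin.le_last i)
      rw [hi, Fin.le_def] at this
      exact le_antisymm (hle _) this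
  · rintro ⟨h0, hstep, hlast⟩
    have hmono : Monotone f := Fin.monotone_iff_le_succ.2 fun j => (hstep j).1
    refine ⟨Fin.apply_le_val_of_step_le_one (g := fun i => f i) (by simp [h0])
      (fun j => (hstep j).2), hmono, Set.Subset.antisymm ?_ ?_⟩
    · rintro _ ⟨i, rfl⟩
      exact hlast ▸ hmono (Fin.le_last i)
    · intro x hx
      obtain ⟨i, hi⟩ := Fin.exists_apply_eq_of_step_le_one (g := fun i => f i)
        (fun j => (hstep j).2) (m := x) (by simp [h0]) (Fin.last n) (hlast ▸ hx)
      exact ⟨i, Fin.ext hi⟩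

def countBelow (S : Finset (Fin n)) (i : Fin (n + 1)) : Fin (n + 1) :=
  ⟨#{j ∈ S | j.castSucc < i},
    Nat.lt_succ_of_le ((card_le_univ _).trans (Fintype.card_fin n).le)⟩

def jumps (f : Fin (n + 1) → Fin (n + 1)) : Finset (Fin n) :=
  {j | f j.castSucc ≠ f j.succ}

theorem countBelow_zero (S : Finset (Fin n)) : countBelow S 0 = 0 := by
  simp [countBelow]

theorem countBelow_succ (S : Finset (Fin n)) (j : Fin n) :
    (countBelow S j.succ : ℕ) = countBelow S j.castSucc + if j ∈ S then 1 else 0 := by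
  have hsplit : {j' ∈ S | j'.castSucc < j.succ} =
      {j' ∈ S | j'.castSucc < j.castSucc} ∪ {j' ∈ S | j' = j} := by
    simp only [Fin.castSucc_lt_succ_iff, Fin.castSucc_lt_castSucc_iff, le_iff_lt_or_eq, filter_or]
  rw [countBelow, countBelow, Fin.val_mk, Fin.val_mk, hsplit, card_union_of_disjoint, filter_eq']
  · split_ifs <;> simp
  · exact disjoint_filter.2 fun j' _ hlt heq => hlt.ne (congrArg Fin.castSucc heq)

theorem countBelow_last (S : Finset (Fin n)) : (countBelow S (Fin.last n) : ℕ) = #S := by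
  simp [countBelow, Fin.castSucc_lt_last]

theorem countBelow_mem_H (S : Finset (Fin n)) : countBelow S ∈ H n #S := by
  refine (mem_H_iff (card_le_univ S |>.trans (Fintype.card_fin n).le)).2
    ⟨countBelow_zero S, fun j => ?_, countBelow_last S⟩
  rw [Fin.le_def, countBelow_succ]
  split_ifs <;> simp

theorem jumps_countBelow (S : Finset (Fin n)) : jumps (countBelow S) = S := by
  ext j
  simp only [jumps, mem_filter, mem_univ, true_and, ne_eq, Fin.ext_iff, countBelow_succ]
  split_ifs <;> simp_all

theorem countBelow_jumps (hk : k ≤ n) {f : Fin (n + 1) → Fin (n + 1)} (hf : f ∈ H n k) :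
    countBelow (jumps f) = f := by
  obtain ⟨h0, hstep, -⟩ := (mem_H_iff hk).1 hf
  funext i
  induction i using Fin.induction with
  | zero => rw [countBelow_zero, h0]
  | succ j ih =>
    have hj := hstep j
    rw [Fin.le_def] at hj
    rw [Fin.ext_iff, countBelow_succ, ih]
    simp only [jumps, mem_filter, mem_univ, true_and, ne_eq, Fin.ext_iff]
    split_ifs <;> omega

theorem card_jumps (hk : k ≤ n) {f : Fin (n + 1) → Fin (n + 1)} (hf : f ∈ H n k) :
    #(jumps f) = k := by
  rw [← countBelow_last, countBelow_jumps hk hf, ((mem_H_iff hk).1 hf).2.2]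

def equivFinsetCard (hk : k ≤ n) : H n k ≃ {S : Finset (Fin n) // #S = k} where
  toFun f := ⟨jumps f, card_jumps hk f.2⟩
  invFun | ⟨S, hS⟩ => ⟨countBelow S, hS ▸ countBelow_mem_H S⟩
  left_inv f := Subtype.ext (countBelow_jumps hk f.2)
  right_inv S := Subtype.ext (jumps_countBelow S.1)

theorem card_H (hk : k ≤ n) : Nat.card (H n k) = n.choose k := by
  rw [Nat.card_congr (equivFinsetCard hk), Nat.card_eq_fintype_card, Fintype.card_finset_len,
    Fintype.card_fin]

end Subexceeding

theorem stmt1 (n k : ℕ) (hk : k ≤ n) :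
    Nat.card {f : Fin (n+1) → Fin (n+1) //
        (∀ i, (f i : ℕ) ≤ (i : ℕ)) ∧ Monotone f ∧
        Set.range f = {x : Fin (n+1) | (x : ℕ) ≤ k}} = n.choose k :=
  Subexceeding.card_H hk
end

section
/- For integers 0 < k < n, Card(H^k_n) = Card(H^{k-1}_{n-1}) + Card(H^k_{n-1}). -/
/-!
Every `f ∈ H (m+1) k` with `0 < k ≤ m` ends with `f (m+1) = k`, and since the value `k - 1` is
attained before `m + 1`, its value `f m` is `k - 1` or `k`. Restricting `f` to `[m]` therefore
gives an element of `H m (k-1)` or of `H m k`; conversely every element of either set extends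
back by the value `k` at `m + 1`.
-/

/-- `H n k` : weakly increasing sub-exceeding functions on `[n]` with image `{0,...,k}`. -/
def H (n k : ℕ) : Set (Fin (n+1) → Fin (n+1)) :=
  {f | (∀ i, (f i : ℕ) ≤ (i : ℕ)) ∧ Monotone f ∧
       Set.range f = {x : Fin (n+1) | (x : ℕ) ≤ k}}

namespace H

section

variable {n k : ℕ} {f : Fin (n+1) → Fin (n+1)}

lemma val_le (hf : f ∈ H n k) (i : Fin (n+1)) : (f i : ℕ) ≤ k := by
  have : f i ∈ Set.range f := ⟨i, rfl⟩
  rwa [hf.2.2] at this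

lemma exists_apply_eq (hf : f ∈ H n k) {x : Fin (n+1)} (hx : (x : ℕ) ≤ k) : ∃ i, f i = x := by
  rw [← Set.mem_range, hf.2.2]
  exact hx

lemma val_apply_last (hf : f ∈ H n k) (hk : k ≤ n) : (f (Fin.last n) : ℕ) = k := by
  obtain ⟨i, hi⟩ := exists_apply_eq hf (x := ⟨k, by omega⟩) le_rfl
  have hle : f i ≤ f (Fin.last n) := hf.2.1 (Fin.le_last i)
  rw [hi, Fin.le_def] at hle
  have := val_le hf (Fin.last n)
  simp only at hle
  omega

end

def restrict {m : ℕ} (f : Fin (m+2) → Fin (m+2)) (hf : ∀ i, (f i : ℕ) ≤ i) :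
    Fin (m+1) → Fin (m+1) :=
  fun i => (f i.castSucc).castLT ((hf _).trans_lt i.is_lt)

def extend {m : ℕ} (g : Fin (m+1) → Fin (m+1)) (c : Fin (m+2)) : Fin (m+2) → Fin (m+2) :=
  Fin.lastCases c (fun i => (g i).castSucc)

section

variable {m k : ℕ}

lemma restrict_mem {f : Fin (m+2) → Fin (m+2)} (hf : f ∈ H (m+1) k) :
    restrict f hf.1 ∈ H m (f (Fin.last m).castSucc) := by
  have hmono := hf.2.1
  refine ⟨fun i => hf.1 i.castSucc,
    fun a b hab => hmono (Fin.castSucc_le_castSucc_iff.mpr hab), ?_⟩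
  ext x
  constructor
  · rintro ⟨i, rfl⟩
    exact hmono (Fin.castSucc_le_castSucc_iff.mpr (Fin.le_last i))
  · intro hx
    obtain ⟨i, hi⟩ := exists_apply_eq hf (x := x.castSucc) ((hx : _).trans (val_le hf _))
    cases i using Fin.lastCases with
    | last =>
      refine ⟨Fin.last m, Fin.castSucc_injective _ ?_⟩
      rw [restrict, Fin.castSucc_castLT]
      exact le_antisymm (hi ▸ hmono (Fin.le_last _)) hx
    | cast i => exact ⟨i, Fin.castSucc_injective _ hi⟩

lemma extend_mem {g : Fin (m+1) → Fin (m+1)} (hg : g ∈ H m k) {c : Fin (m+2)}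
    (hkc : k ≤ c) (hck : (c : ℕ) ≤ k + 1) : extend g c ∈ H (m+1) c := by
  refine ⟨fun i => ?_, fun a b hab => ?_, ?_⟩
  · cases i using Fin.lastCases with
    | last => simpa [extend] using c.is_le
    | cast i => simpa [extend] using hg.1 i
  · cases b using Fin.lastCases with
    | last =>
      cases a using Fin.lastCases with
      | last => rfl
      | cast a => simpa [extend, Fin.le_def] using (val_le hg a).trans hkc
    | cast b =>
      obtain ⟨a, rfl⟩ : ∃ a', Fin.castSucc a' = a :=
        Fin.exists_castSucc_eq.mpr (Fin.ne_last_of_lt (hab.trans_lt (Fin.castSucc_lt_last b)))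
      simpa [extend] using hg.2.1 (Fin.castSucc_le_castSucc_iff.mp hab)
  · ext x
    constructor
    · rintro ⟨i, rfl⟩
      show (extend g c i : ℕ) ≤ c
      cases i using Fin.lastCases with
      | last => simp [extend]
      | cast i => simpa [extend] using (val_le hg i).trans hkc
    · intro (hx : (x : ℕ) ≤ c)
      rcases hx.eq_or_lt with hxc | hxc
      · exact ⟨Fin.last _, by simp [extend, Fin.ext_iff, hxc]⟩
      · obtain ⟨i, hi⟩ := exists_apply_eq hg (x := ⟨x, by omega⟩) (by simp only; omega)
        exact ⟨i.castSucc, by simp [extend, hi]⟩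

lemma restrict_extend (g : Fin (m+1) → Fin (m+1)) (c : Fin (m+2))
    (h : ∀ i, (extend g c i : ℕ) ≤ i) : restrict (extend g c) h = g :=
  funext fun i => by simp [restrict, extend]

lemma extend_restrict {f : Fin (m+2) → Fin (m+2)} (hf : ∀ i, (f i : ℕ) ≤ i) :
    extend (restrict f hf) (f (Fin.last _)) = f := by
  funext i
  cases i using Fin.lastCases with
  | last => simp [extend]
  | cast i => simp [extend, restrict]

lemma le_val_apply_castSucc_last {f : Fin (m+2) → Fin (m+2)} (hf : f ∈ H (m+1) (k+1))
    (hk : k ≤ m) : k ≤ (f (Fin.last m).castSucc : ℕ) := by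
  obtain ⟨i, hi⟩ := exists_apply_eq hf (x := ⟨k, by omega⟩) (by simp)
  cases i using Fin.lastCases with
  | last => have := val_apply_last hf (by omega); simp_all
  | cast i =>
    have := hf.2.1 (Fin.castSucc_le_castSucc_iff.mpr (Fin.le_last i))
    rwa [hi, Fin.le_def] at this

end

def restrictEquiv {m k l : ℕ} (hl : l ≤ m) (hlk : l ≤ k) (hkl : k ≤ l + 1) :
    {f : H (m+1) k // (f.1 (Fin.last m).castSucc : ℕ) = l} ≃ H m l where
  toFun f := ⟨restrict f.1.1 f.1.2.1, by simpa only [f.2] using restrict_mem f.1.2⟩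
  invFun g := ⟨⟨extend g.1 ⟨k, by omega⟩, extend_mem g.2 hlk hkl⟩,
    by simpa [extend] using val_apply_last g.2 hl⟩
  left_inv f := by
    obtain ⟨⟨f, hf⟩, -⟩ := f
    have hlast : f (Fin.last _) = ⟨k, by omega⟩ := Fin.ext (val_apply_last hf (by omega))
    simp only [← hlast, extend_restrict]
  right_inv g := Subtype.ext (restrict_extend _ _ (extend_mem g.2 hlk hkl).1)

def succEquivSum {m j : ℕ} (hj : j < m) : H (m+1) (j+1) ≃ H m j ⊕ H m (j+1) :=
  (Equiv.sumCompl fun f : H (m+1) (j+1) => (f.1 (Fin.last m).castSucc : ℕ) = j).symm.trans <|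
    Equiv.sumCongr (restrictEquiv hj.le (Nat.le_succ j) le_rfl) <|
      (Equiv.subtypeEquivRight fun f => by
        have := le_val_apply_castSucc_last f.2 hj.le
        have := val_le f.2 (Fin.last m).castSucc
        omega).trans (restrictEquiv hj le_rfl (Nat.le_succ _))

end H

theorem stmt2 (n k : ℕ) (h1 : 0 < k) (h2 : k < n) :
    Nat.card (H n k) = Nat.card (H (n-1) (k-1)) + Nat.card (H (n-1) k) := by
  obtain ⟨j, rfl⟩ : ∃ j, k = j + 1 := ⟨k - 1, by omega⟩
  obtain ⟨m, rfl⟩ : ∃ m, n = m + 1 := ⟨n - 1, by omega⟩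
  rw [Nat.card_congr (H.succEquivSum (by omega)), Nat.card_sum]
  rfl
end

section
/- Card(H_n) = 2^n, where H_n is the union over k = 0,...,n of H^k_n. -/
open Finset

theorem Monotone.apply_wcovBy_apply_of_ordConnected_range {ι α : Type*} [LinearOrder ι]
    [Preorder α] {f : ι → α} (hf : Monotone f) (hr : (Set.range f).OrdConnected) {a b : ι}
    (hab : a ⋖ b) : f a ⩿ f b := by
  refine ⟨hf hab.le, fun x hax hxb => ?_⟩
  obtain ⟨m, rfl⟩ := hr.out ⟨a, rfl⟩ ⟨b, rfl⟩ ⟨hax.le, hxb.le⟩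
  rcases le_or_gt b m with hbm | hmb
  · exact hxb.not_ge (hf hbm)
  · exact hax.not_ge (hf (hab.le_of_lt hmb))

theorem Fin.mem_range_of_le_apply {n : ℕ} {f : Fin (n + 1) → ℕ}
    (hstep : ∀ j : Fin n, f j.succ ≤ f j.castSucc + 1) {m : ℕ} (h0 : f 0 ≤ m) (i : Fin (n + 1))
    (hi : m ≤ f i) : m ∈ Set.range f := by
  induction i using Fin.induction with
  | zero => exact ⟨0, le_antisymm h0 hi⟩
  | succ j ih =>
    by_cases hm : m ≤ f j.castSucc
    · exact ih hm
    · exact ⟨j.succ, by have := hstep j; omega⟩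

namespace H

variable {n : ℕ}

def countBelow (s : Finset (Fin n)) (t : ℕ) : ℕ := #{j ∈ s | j.val < t}

theorem countBelow_zero (s : Finset (Fin n)) : countBelow s 0 = 0 := by
  simp [countBelow]

theorem countBelow_le (s : Finset (Fin n)) (t : ℕ) : countBelow s t ≤ t := by
  simpa [countBelow] using card_le_card_of_injOn (fun j : Fin n => (j : ℕ)) (t := range t)
    (fun j hj => by simp_all) Fin.val_injective.injOn

theorem countBelow_mono (s : Finset (Fin n)) : Monotone (countBelow s) :=
  fun _ _ hst => card_le_card (monotone_filter_right s fun _ _ hj => hj.trans_le hst)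

theorem countBelow_of_le (s : Finset (Fin n)) {t : ℕ} (ht : n ≤ t) : countBelow s t = #s := by
  rw [countBelow, filter_true_of_mem fun j _ => j.isLt.trans_le ht]

theorem countBelow_succ (s : Finset (Fin n)) (j : Fin n) :
    countBelow s (j + 1) = countBelow s j + if j ∈ s then 1 else 0 := by
  have hsplit : ∀ j' : Fin n, (if (j' : ℕ) < j + 1 then 1 else 0) =
      (if (j' : ℕ) < j then 1 else 0) + if j' = j then 1 else 0 := by
    intro j'
    rcases lt_trichotomy (j' : ℕ) j with h | h | h
    · simp [h, h.trans (Nat.lt_succ_self _), Fin.ne_of_lt h]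
    · simp [Fin.ext h]
    · simp [h.not_gt, (Nat.succ_le_of_lt h).not_gt, (Fin.ne_of_lt h).symm]
  simp only [countBelow, card_filter, hsplit, sum_add_distrib, sum_ite_eq']

def ofJumps (s : Finset (Fin n)) (i : Fin (n + 1)) : Fin (n + 1) :=
  ⟨countBelow s i, (countBelow_le s i).trans_lt i.isLt⟩

def jumps (f : Fin (n + 1) → Fin (n + 1)) : Finset (Fin n) := {j | f j.castSucc ≠ f j.succ}

theorem jumps_ofJumps (s : Finset (Fin n)) : jumps (ofJumps s) = s := by
  ext j
  by_cases hj : j ∈ s <;> simp [jumps, ofJumps, Fin.ext_iff, countBelow_succ, hj]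

theorem range_ofJumps (s : Finset (Fin n)) :
    Set.range (ofJumps s) = {x : Fin (n + 1) | (x : ℕ) ≤ #s} := by
  ext x
  constructor
  · rintro ⟨i, rfl⟩
    exact (countBelow_mono s i.is_le).trans_eq (countBelow_of_le s le_rfl)
  · intro hx
    have hstep (j : Fin n) : countBelow s j.succ ≤ countBelow s j.castSucc + 1 := by
      simp only [Fin.val_succ, Fin.val_castSucc, countBelow_succ]
      split <;> omega
    obtain ⟨i, hi⟩ := Fin.mem_range_of_le_apply (f := fun i => countBelow s i) hstep
      (m := x) (by simp [countBelow_zero]) (Fin.last n)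
      (hx.trans_eq (countBelow_of_le s le_rfl).symm)
    exact ⟨i, Fin.ext hi⟩

theorem ofJumps_mem (s : Finset (Fin n)) : ofJumps s ∈ H n #s :=
  ⟨fun i => countBelow_le s i, fun _ _ hij => countBelow_mono s hij, range_ofJumps s⟩

theorem ofJumps_jumps {k : ℕ} {f : Fin (n + 1) → Fin (n + 1)} (hf : f ∈ H n k) :
    ofJumps (jumps f) = f := by
  obtain ⟨hle, hmono, hrange⟩ := hf
  have hconn : (Set.range f).OrdConnected :=
    hrange ▸ ⟨fun _ _ _ hy _ hz => (Fin.le_def.mp hz.2).trans hy⟩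
  funext i
  induction i using Fin.induction with
  | zero => exact Fin.ext <| (countBelow_zero (jumps f)).trans (Nat.le_zero.mp (hle 0)).symm
  | succ j ih =>
    have hstep := hmono.apply_wcovBy_apply_of_ordConnected_range hconn
      (a := j.castSucc) (b := j.succ) (by simp)
    rw [Fin.ext_iff] at ih ⊢
    simp only [ofJumps, Fin.val_castSucc, Fin.val_succ] at ih ⊢
    rw [countBelow_succ, ih]
    rcases wcovBy_iff_eq_or_covBy.mp hstep with heq | hcov
    · simp [jumps, heq]
    · simp only [Fin.covBy_iff, Nat.covBy_iff_add_one_eq] at hcov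
      simp [jumps, hcov.symm, Fin.ext_iff]

end H

theorem stmt3 (n : ℕ) : Nat.card (⋃ k ∈ Finset.range (n+1), H n k) = 2 ^ n := by
  have hunion : (⋃ k ∈ Finset.range (n+1), H n k) = Set.range (H.ofJumps (n := n)) := by
    ext f
    simp only [Set.mem_iUnion, mem_range, Set.mem_range]
    constructor
    · rintro ⟨k, -, hk⟩
      exact ⟨H.jumps f, H.ofJumps_jumps hk⟩
    · rintro ⟨s, rfl⟩
      exact ⟨#s, Nat.lt_succ_of_le (card_le_univ s |>.trans_eq (Fintype.card_fin n)),
        H.ofJumps_mem s⟩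
  rw [hunion, Nat.card_range_of_injective (Function.LeftInverse.injective H.jumps_ofJumps)]
  simp [Nat.card_eq_fintype_card]
end

section
/- For every integer k ≥ 4, the minimum distance of the binary linear code L_k = { (m, m·G_k) : m ∈ F_2^k } ⊆ F_2^{2k} equals 4. -/
/-!
Over `𝔽₂` we have `m ⬝ G_k = (∑ᵢ mᵢ) · 𝟙 + m`, and `∑ᵢ mᵢ` is the parity of the weight of `m`.
If `m` has even weight the codeword is `(m, m)`, of weight `2 wt(m) ≥ 4`; if it has odd weight the
codeword is `(m, 𝟙 + m)`, whose two halves have complementary supports, so its weight is `k ≥ 4`.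
The bound is attained by any `m` of weight two.
-/

/-- the k×k matrix over F₂ with 0 on the diagonal and 1 elsewhere -/
def G (k : ℕ) : Matrix (Fin k) (Fin k) (ZMod 2) := fun i j => if i = j then 0 else 1

section HammingZModTwo

variable {ι : Type*} [Fintype ι]

theorem sum_eq_hammingNorm (m : ι → ZMod 2) : ∑ i, m i = (hammingNorm m : ZMod 2) := by
  have eq_one_of_ne_zero : ∀ a : ZMod 2, a ≠ 0 → a = 1 := by decide
  rw [hammingNorm, ← Finset.sum_filter_ne_zero,
    Finset.sum_congr rfl fun i hi => eq_one_of_ne_zero (m i) (Finset.mem_filter.mp hi).2]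
  simp

theorem hammingNorm_add_hammingNorm_one_add (m : ι → ZMod 2) :
    hammingNorm m + hammingNorm (fun i => 1 + m i) = Fintype.card ι := by
  have one_add_ne_zero_iff : ∀ a : ZMod 2, 1 + a ≠ 0 ↔ ¬a ≠ 0 := by decide
  simp only [hammingNorm, one_add_ne_zero_iff]
  exact Finset.card_filter_add_card_filter_not _

end HammingZModTwo

theorem vecMul_G (k : ℕ) (m : Fin k → ZMod 2) :
    Matrix.vecMul m (G k) = fun j => (∑ i, m i) + m j := by
  funext j
  have split_diagonal : ∀ i, m i * G k i j = m i - if i = j then m i else 0 := by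
    intro i
    by_cases h : i = j <;> simp [G, h]
  rw [Matrix.vecMul, dotProduct, Finset.sum_congr rfl fun i _ => split_diagonal i,
    Finset.sum_sub_distrib, Finset.sum_ite_eq' Finset.univ j m, if_pos (Finset.mem_univ j),
    sub_eq_add_neg, ZMod.neg_eq_self_mod_two]

theorem vecMul_G_of_even (k : ℕ) {m : Fin k → ZMod 2} (hm : Even (hammingNorm m)) :
    Matrix.vecMul m (G k) = m := by
  rw [vecMul_G, sum_eq_hammingNorm, hm.natCast_zmod_two]
  simp

theorem vecMul_G_of_odd (k : ℕ) {m : Fin k → ZMod 2} (hm : Odd (hammingNorm m)) :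
    Matrix.vecMul m (G k) = fun j => 1 + m j := by
  rw [vecMul_G, sum_eq_hammingNorm, hm.natCast_zmod_two]

theorem four_le_hammingNorm_add_hammingNorm_vecMul_G {k : ℕ} (hk : 4 ≤ k)
    {m : Fin k → ZMod 2} (hm : m ≠ 0) :
    4 ≤ hammingNorm m + hammingNorm (Matrix.vecMul m (G k)) := by
  rcases Nat.even_or_odd (hammingNorm m) with heven | hodd
  · have hpos : 0 < hammingNorm m := hammingNorm_pos_iff.mpr hm
    rw [vecMul_G_of_even k heven]
    obtain ⟨r, hr⟩ := heven
    omega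
  · rw [vecMul_G_of_odd k hodd, hammingNorm_add_hammingNorm_one_add, Fintype.card_fin]
    exact hk

theorem hammingNorm_indicator_lt_two {k : ℕ} (hk : 2 ≤ k) :
    hammingNorm (fun i : Fin k => if (i : ℕ) < 2 then (1 : ZMod 2) else 0) = 2 := by
  simp only [hammingNorm, ne_eq, ite_eq_right_iff, one_ne_zero, imp_false, not_not]
  rw [Fin.card_filter_val_lt]
  omega

theorem stmt8 (k : ℕ) (hk : 4 ≤ k) :
    IsLeast {w : ℕ | ∃ m : Fin k → ZMod 2, m ≠ 0 ∧
      w = hammingNorm m + hammingNorm (Matrix.vecMul m (G k))} 4 := by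
  refine ⟨?_, fun w ⟨m, hm, hw⟩ => hw ▸ four_le_hammingNorm_add_hammingNorm_vecMul_G hk hm⟩
  have hweight := hammingNorm_indicator_lt_two (k := k) (by omega)
  refine ⟨_, hammingNorm_ne_zero_iff.mp (hweight ▸ two_ne_zero), ?_⟩
  rw [vecMul_G_of_even k (by rw [hweight]; decide), hweight]
end
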